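/- For any reduced indecomposable root system Φ, any r, s ∈ Φ⁺ and any Δ ⊆ Π(Φ), the numbers K^Δ satisfy K_{r,s}^Δ = (−1)^{ht(r)−ht(s)} · ((r,r)/(s,s)) · K_{−s,−r}^Δ. -/

import Mathlib

open RealInnerProductSpace Classical

/-!
Reversing a decomposition `(q₁, …, q_t)` of `r` starting at `s` gives a decomposition of `-s`
starting at `-r`, and this is a bijection. Along the chain `a ↦ a + q`, the cyclic relation for the
triple `(a, q, -(a + q))` together with antisymmetry gives
`N a q = -((a + q, a + q) / (a, a)) · N (-(a + q)) q`, so the products of the two chains agree up to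
the sign `(-1)^t` and the telescoping length ratio `(r, r) / (s, s)`; finally `t = ht r - ht s`.
-/

/-- The number K_{r,s}^Δ: the sum over all s-decompositions (q₁,…,q_t) of r
with respect to Δ of the products N_{s,q₁}N_{s+q₁,q₂}⋯N_{s+q₁+⋯+q_{t−1},q_t};
K_{s,s}^Δ = 1, and K_{r,s}^Δ = 0 if no decomposition exists. -/
noncomputable def Kc {V : Type*} [AddCommGroup V] (Φ Δ : Set V)
    (N : V → V → ℝ) (r s : V) : ℝ :=
  if r = s then 1 else
  ∑ᶠ L ∈ {L : List V | (∀ q ∈ L, q ∈ Δ) ∧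
      (∀ i, 0 < i → i ≤ L.length → s + (L.take i).sum ∈ Φ) ∧
      s + L.sum = r},
    ((List.range L.length).map
      (fun i => N (s + (L.take i).sum) (L.getD i 0))).prod

section Decomposition

variable {V : Type*} [AddCommGroup V]

def decompositions (Φ Δ : Set V) (s r : V) : Set (List V) :=
  {L | (∀ q ∈ L, q ∈ Δ) ∧ (∀ i, 0 < i → i ≤ L.length → s + (L.take i).sum ∈ Φ) ∧ s + L.sum = r}

noncomputable def decompProd (N : V → V → ℝ) (a : V) (L : List V) : ℝ :=
  ((List.range L.length).map (fun i => N (a + (L.take i).sum) (L.getD i 0))).prod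

lemma Kc_of_ne {Φ Δ : Set V} {N : V → V → ℝ} {r s : V} (h : r ≠ s) :
    Kc Φ Δ N r s = ∑ᶠ L ∈ decompositions Φ Δ s r, decompProd N s L :=
  if_neg h

@[simp]
lemma decompProd_nil (N : V → V → ℝ) (a : V) : decompProd N a [] = 1 := rfl

lemma decompProd_cons (N : V → V → ℝ) (a q : V) (L : List V) :
    decompProd N a (q :: L) = N a q * decompProd N (a + q) L := by
  simp only [decompProd, List.length_cons, List.range_succ_eq_map, List.map_cons,
    List.prod_cons, List.map_map]
  congr 1
  · simp
  · refine congrArg List.prod (List.map_congr_left fun i _ => ?_)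
    simp [add_assoc]

lemma decompProd_append_singleton (N : V → V → ℝ) (a q : V) (L : List V) :
    decompProd N a (L ++ [q]) = decompProd N a L * N (a + L.sum) q := by
  induction L generalizing a with
  | nil => simp [decompProd_cons]
  | cons x L ih => simp [decompProd_cons, ih, add_assoc, mul_assoc]

lemma sum_reverse_take (L : List V) (i : ℕ) :
    (L.reverse.take i).sum = L.sum - (L.take (L.length - i)).sum := by
  rw [List.take_reverse, List.sum_reverse, eq_sub_iff_add_eq', ← List.sum_append,
    List.take_append_drop]

lemma reverse_mem_decompositions {Φ Δ : Set V} (hΦneg : ∀ r ∈ Φ, -r ∈ Φ) {a b : V}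
    (ha : a ∈ Φ) {L : List V} (hL : L ∈ decompositions Φ Δ a b) :
    L.reverse ∈ decompositions Φ Δ (-b) (-a) := by
  obtain ⟨hLΔ, hprefix, rfl⟩ := hL
  refine ⟨fun q hq => hLΔ q (List.mem_reverse.mp hq), fun i hi hile => ?_, ?_⟩
  · have hcompl : -(a + L.sum) + (L.reverse.take i).sum
        = -(a + (L.take (L.length - i)).sum) := by
      rw [sum_reverse_take]; abel
    rw [hcompl]
    rcases Nat.eq_zero_or_pos (L.length - i) with hj | hj
    · simpa [hj] using hΦneg a ha
    · exact hΦneg _ (hprefix _ hj (Nat.sub_le _ _))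
  · rw [List.sum_reverse]; abel

lemma bijOn_reverse_decompositions {Φ Δ : Set V} (hΦneg : ∀ r ∈ Φ, -r ∈ Φ) {r s : V}
    (hr : r ∈ Φ) (hs : s ∈ Φ) :
    Set.BijOn List.reverse (decompositions Φ Δ s r) (decompositions Φ Δ (-r) (-s)) := by
  refine ⟨fun L hL => reverse_mem_decompositions hΦneg hs hL,
    fun L _ M _ h => List.reverse_injective h, fun M hM => ⟨M.reverse, ?_, M.reverse_reverse⟩⟩
  simpa using reverse_mem_decompositions hΦneg (hΦneg r hr) hM

lemma ht_sum_of_forall_mem {Δ : Set V} {ht : V → ℤ} (hhtadd : ∀ u v : V, ht (u + v) = ht u + ht v)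
    (hhtΔ : ∀ q ∈ Δ, ht q = 1) {L : List V} (hL : ∀ q ∈ L, q ∈ Δ) : ht L.sum = L.length := by
  induction L with
  | nil => simpa using hhtadd 0 0
  | cons q L ih =>
    rw [List.sum_cons, hhtadd, hhtΔ q (hL q List.mem_cons_self),
      ih fun x hx => hL x (List.mem_cons_of_mem q hx), List.length_cons]
    push_cast; ring

end Decomposition

section InnerProduct

variable {V : Type*} [NormedAddCommGroup V] [InnerProductSpace ℝ V]

lemma structureConst_eq_neg_mul {Φ : Set V} {N : V → V → ℝ}
    (h0 : (0 : V) ∉ Φ) (hΦneg : ∀ r ∈ Φ, -r ∈ Φ)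
    (hanti : ∀ r s, r ∈ Φ → s ∈ Φ → r + s ∈ Φ → N s r = -N r s)
    (hcyc : ∀ r₁ r₂ r₃, r₁ ∈ Φ → r₂ ∈ Φ → r₃ ∈ Φ → r₁ + r₂ + r₃ = 0 →
      N r₁ r₂ / ⟪r₃, r₃⟫ = N r₂ r₃ / ⟪r₁, r₁⟫ ∧
      N r₂ r₃ / ⟪r₁, r₁⟫ = N r₃ r₁ / ⟪r₂, r₂⟫)
    {a q : V} (ha : a ∈ Φ) (hq : q ∈ Φ) (haq : a + q ∈ Φ) :
    N a q = -(⟪a + q, a + q⟫ / ⟪a, a⟫) * N (-(a + q)) q := by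
  have hcycle := (hcyc a q (-(a + q)) ha hq (hΦneg _ haq) (by abel)).1
  have hswap : N q (-(a + q)) = -N (-(a + q)) q :=
    hanti _ _ (hΦneg _ haq) hq (by simpa using hΦneg _ ha)
  have hnorm : ⟪a + q, a + q⟫ ≠ 0 := inner_self_ne_zero.mpr fun h => h0 (h ▸ haq)
  rw [inner_neg_neg, hswap, div_eq_iff hnorm] at hcycle
  rw [hcycle]
  ring

lemma decompProd_eq_mul_decompProd_reverse {Φ Δ : Set V} {N : V → V → ℝ}
    (h0 : (0 : V) ∉ Φ) (hΦneg : ∀ r ∈ Φ, -r ∈ Φ) (hΔ : Δ ⊆ Φ)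
    (hanti : ∀ r s, r ∈ Φ → s ∈ Φ → r + s ∈ Φ → N s r = -N r s)
    (hcyc : ∀ r₁ r₂ r₃, r₁ ∈ Φ → r₂ ∈ Φ → r₃ ∈ Φ → r₁ + r₂ + r₃ = 0 →
      N r₁ r₂ / ⟪r₃, r₃⟫ = N r₂ r₃ / ⟪r₁, r₁⟫ ∧
      N r₂ r₃ / ⟪r₁, r₁⟫ = N r₃ r₁ / ⟪r₂, r₂⟫)
    {a b : V} (ha : a ∈ Φ) {L : List V} (hL : L ∈ decompositions Φ Δ a b) :
    decompProd N a L = (-1 : ℝ) ^ L.length * (⟪b, b⟫ / ⟪a, a⟫) *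
      decompProd N (-b) L.reverse := by
  induction L generalizing a with
  | nil =>
    obtain ⟨-, -, rfl⟩ := hL
    have hnorm : ⟪a, a⟫ ≠ 0 := inner_self_ne_zero.mpr fun h => h0 (h ▸ ha)
    simp only [List.sum_nil, add_zero, List.reverse_nil, decompProd_nil, List.length_nil,
      pow_zero, div_self hnorm, one_mul]
  | cons q L ih =>
    obtain ⟨hLΔ, hprefix, rfl⟩ := hL
    have haq : a + q ∈ Φ := by simpa using hprefix 1 one_pos (by simp)
    have htail : L ∈ decompositions Φ Δ (a + q) (a + (q :: L).sum) := by
      refine ⟨fun x hx => hLΔ x (List.mem_cons_of_mem q hx), fun i hi hile => ?_, ?_⟩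
      · simpa [add_assoc] using hprefix (i + 1) (Nat.succ_pos i) (by simpa using hile)
      · simp [add_assoc]
    have hlast : -(a + (q :: L).sum) + L.reverse.sum = -(a + q) := by
      simp only [List.sum_cons, List.sum_reverse]; abel
    have hnorm : ⟪a + q, a + q⟫ ≠ 0 := inner_self_ne_zero.mpr fun h => h0 (h ▸ haq)
    rw [decompProd_cons, ih haq htail, List.reverse_cons, decompProd_append_singleton, hlast,
      structureConst_eq_neg_mul h0 hΦneg hanti hcyc ha (hΔ (hLΔ q List.mem_cons_self)) haq,
      List.length_cons, pow_succ]
    field_simp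

end InnerProduct

theorem Kc_neg_symmetry_general {V : Type*} [NormedAddCommGroup V]
    [InnerProductSpace ℝ V] (Φ Δ : Set V) (N : V → V → ℝ) (ht : V → ℤ)
    (h0 : (0 : V) ∉ Φ)
    (hΦneg : ∀ r ∈ Φ, -r ∈ Φ)
    (hΔ : Δ ⊆ Φ)
    (hhtadd : ∀ u v : V, ht (u + v) = ht u + ht v)
    (hhtΔ : ∀ q ∈ Δ, ht q = 1)
    (hanti : ∀ r s, r ∈ Φ → s ∈ Φ → r + s ∈ Φ → N s r = -N r s)
    (hcyc : ∀ r₁ r₂ r₃, r₁ ∈ Φ → r₂ ∈ Φ → r₃ ∈ Φ → r₁ + r₂ + r₃ = 0 →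
      N r₁ r₂ / ⟪r₃, r₃⟫ = N r₂ r₃ / ⟪r₁, r₁⟫ ∧
      N r₂ r₃ / ⟪r₁, r₁⟫ = N r₃ r₁ / ⟪r₂, r₂⟫)
    (r s : V) (hr : r ∈ Φ) (hs : s ∈ Φ) :
    Kc Φ Δ N r s
      = (-1 : ℝ) ^ (ht r - ht s) * (⟪r, r⟫ / ⟪s, s⟫) * Kc Φ Δ N (-s) (-r) := by
  by_cases hrs : r = s
  · subst hrs
    have hnorm : ⟪r, r⟫ ≠ 0 := inner_self_ne_zero.mpr fun h => h0 (h ▸ hr)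
    rw [Kc, Kc, if_pos rfl, if_pos rfl, sub_self, zpow_zero, div_self hnorm, one_mul, one_mul]
  rw [Kc_of_ne hrs, Kc_of_ne (neg_injective.ne (Ne.symm hrs)), mul_finsum_mem]
  refine finsum_mem_eq_of_bijOn _ (bijOn_reverse_decompositions hΦneg hr hs) fun L hL => ?_
  have hlength : ht r - ht s = L.length := by
    rw [← hL.2.2, hhtadd, ht_sum_of_forall_mem hhtadd hhtΔ hL.1]; ring
  rw [decompProd_eq_mul_decompProd_reverse h0 hΦneg hΔ hanti hcyc hs hL, hlength, zpow_natCast]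

/-- for a reduced (indecomposable) root system Φ with structure
constants N satisfying the Carter relations, any positive roots r, s and any
set Δ of fundamental roots,
K_{r,s}^Δ = (−1)^{ht r − ht s} · ((r,r)/(s,s)) · K_{−s,−r}^Δ. -/
theorem Kc_neg_symmetry {V : Type*} [NormedAddCommGroup V]
    [InnerProductSpace ℝ V] (Φ Δ : Set V) (N : V → V → ℝ) (ht : V → ℤ)
    (hΦfin : Φ.Finite) (h0 : (0 : V) ∉ Φ)
    (hΦneg : ∀ r ∈ Φ, -r ∈ Φ)
    (hred : ∀ r ∈ Φ, ∀ t : ℝ, t • r ∈ Φ → t = 1 ∨ t = -1)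
    (hΔ : Δ ⊆ Φ)
    (hhtadd : ∀ u v : V, ht (u + v) = ht u + ht v)
    (hhtΔ : ∀ q ∈ Δ, ht q = 1)
    (hzero : ∀ r s, r + s ∉ Φ → N r s = 0)
    (hanti : ∀ r s, r ∈ Φ → s ∈ Φ → r + s ∈ Φ → N s r = -N r s)
    (hcyc : ∀ r₁ r₂ r₃, r₁ ∈ Φ → r₂ ∈ Φ → r₃ ∈ Φ → r₁ + r₂ + r₃ = 0 →
      N r₁ r₂ / ⟪r₃, r₃⟫ = N r₂ r₃ / ⟪r₁, r₁⟫ ∧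
      N r₂ r₃ / ⟪r₁, r₁⟫ = N r₃ r₁ / ⟪r₂, r₂⟫)
    (hfour : ∀ r₁ r₂ r₃ r₄ : V, r₁ ∈ Φ → r₂ ∈ Φ → r₃ ∈ Φ → r₄ ∈ Φ →
      r₁ + r₂ + r₃ + r₄ = 0 → r₁ + r₂ ≠ 0 → r₁ + r₃ ≠ 0 → r₂ + r₃ ≠ 0 →
      N r₁ r₂ * N r₃ r₄ / ⟪r₁ + r₂, r₁ + r₂⟫ +
      N r₂ r₃ * N r₁ r₄ / ⟪r₂ + r₃, r₂ + r₃⟫ +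
      N r₃ r₁ * N r₂ r₄ / ⟪r₃ + r₁, r₃ + r₁⟫ = 0)
    (r s : V) (hr : r ∈ Φ) (hs : s ∈ Φ)
    (hrpos : 0 < ht r) (hspos : 0 < ht s) :
    Kc Φ Δ N r s
      = (-1 : ℝ) ^ (ht r - ht s) * (⟪r, r⟫ / ⟪s, s⟫) * Kc Φ Δ N (-s) (-r) :=
  Kc_neg_symmetry_general Φ Δ N ht h0 hΦneg hΔ hhtadd hhtΔ hanti hcyc r s hr hs
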